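/- Let H be a cocommutative bialgebra with coquasitriangular structure R : H⊗H → k, and χ : H⊗H → k a linear map. Then (H,R,χ) is pre-Cartier if and only if χ is a biderivation, i.e. χ(a⊗bc) = χ(a⊗b)ε(c) + ε(b)χ(a⊗c) and χ(ab⊗c) = ε(a)χ(b⊗c) + ε(b)χ(a⊗c) for all a,b,c ∈ H. Moreover (H,R,χ) is Cartier if and only if χ is additionally symmetric: χ(a⊗b) = χ(b⊗a). -/

import Mathlib

open scoped TensorProduct

noncomputable section

variable (k H : Type) [CommRing k] [Ring H] [Bialgebra k H]

/-- Convolution product of two functionals on the coalgebra `H ⊗ H`. -/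
def conv2 (f g : H ⊗[k] H →ₗ[k] k) : H ⊗[k] H →ₗ[k] k :=
  (LinearMap.mul' k k).comp ((TensorProduct.map f g).comp
    (Coalgebra.comul (R := k) (A := H ⊗[k] H)))

/-- Convolution product of two functionals on the coalgebra `H ⊗ (H ⊗ H)`. -/
def conv3 (f g : H ⊗[k] (H ⊗[k] H) →ₗ[k] k) : H ⊗[k] (H ⊗[k] H) →ₗ[k] k :=
  (LinearMap.mul' k k).comp ((TensorProduct.map f g).comp
    (Coalgebra.comul (R := k) (A := H ⊗[k] (H ⊗[k] H))))

/-- `f₁₂(a⊗b⊗c) = f(a⊗b)ε(c)`. -/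
def f12 (f : H ⊗[k] H →ₗ[k] k) : H ⊗[k] (H ⊗[k] H) →ₗ[k] k :=
  (LinearMap.mul' k k).comp
    ((TensorProduct.map f (Coalgebra.counit (R := k) (A := H))).comp
      (TensorProduct.assoc k H H H).symm.toLinearMap)

/-- `f₂₃(a⊗b⊗c) = ε(a)f(b⊗c)`. -/
def f23 (f : H ⊗[k] H →ₗ[k] k) : H ⊗[k] (H ⊗[k] H) →ₗ[k] k :=
  (LinearMap.mul' k k).comp
    (TensorProduct.map (Coalgebra.counit (R := k) (A := H)) f)

/-- `f₁₃(a⊗b⊗c) = ε(b)f(a⊗c)`. -/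
def f13 (f : H ⊗[k] H →ₗ[k] k) : H ⊗[k] (H ⊗[k] H) →ₗ[k] k :=
  (f12 k H f).comp (LinearMap.lTensor H (TensorProduct.comm k H H).toLinearMap)

/-- Convolution `f ∗ g` of a scalar-valued `f` with an `H`-valued `g` on `H ⊗ H`. -/
def convSM (f : H ⊗[k] H →ₗ[k] k) (g : H ⊗[k] H →ₗ[k] H) : H ⊗[k] H →ₗ[k] H :=
  (TensorProduct.lid k H).toLinearMap.comp ((TensorProduct.map f g).comp
    (Coalgebra.comul (R := k) (A := H ⊗[k] H)))

/-- Convolution `g ∗ f` of an `H`-valued `g` with a scalar-valued `f` on `H ⊗ H`. -/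
def convMS (g : H ⊗[k] H →ₗ[k] H) (f : H ⊗[k] H →ₗ[k] k) : H ⊗[k] H →ₗ[k] H :=
  (TensorProduct.rid k H).toLinearMap.comp ((TensorProduct.map g f).comp
    (Coalgebra.comul (R := k) (A := H ⊗[k] H)))

/-- `(m ⊗ Id) : H ⊗ (H ⊗ H) → H ⊗ H` (after reassociation). -/
def mulIdC3 : H ⊗[k] (H ⊗[k] H) →ₗ[k] H ⊗[k] H :=
  (LinearMap.rTensor H (LinearMap.mul' k H)).comp
    (TensorProduct.assoc k H H H).symm.toLinearMap

/-- `(Id ⊗ m) : H ⊗ (H ⊗ H) → H ⊗ H`. -/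
def idMulC3 : H ⊗[k] (H ⊗[k] H) →ₗ[k] H ⊗[k] H :=
  LinearMap.lTensor H (LinearMap.mul' k H)

/-! When `H` is cocommutative so are `H ⊗ H` and `H ⊗ (H ⊗ H)`, hence convolution of
`k`-valued functionals on them is commutative. Precomposition with the coalgebra maps
`a ⊗ b ⊗ c ↦ ε(c) a ⊗ b` and `a ⊗ b ⊗ c ↦ ε(a) b ⊗ c` is multiplicative for convolution, so
`R⁻¹₁₂ ∗ χ₁₃ ∗ R₁₂ = χ₁₃ ∗ (R ∗ R⁻¹)₁₂ = χ₁₃`, and likewise for the indices `23`: the pre-Cartier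
identities reduce to the biderivation identities, while the compatibility of `χ` with the
multiplication holds for every `χ`. The Cartier condition `R ∗ χ = χ ∘ τ ∗ R` becomes
`χ ∗ R = χ ∘ τ ∗ R`, which is `χ = χ ∘ τ` because `R` is convolution invertible. -/

open Coalgebra WithConv

section Convolution

variable {K C D A M : Type} [CommSemiring K] [AddCommMonoid C] [Module K C] [Coalgebra K C]
  [AddCommMonoid D] [Module K D] [Coalgebra K D] [AddCommMonoid M] [Module K M]

theorem lid_map_comp_comul_eq_rid_map_comp_comul [IsCocomm K C] (f : C →ₗ[K] K)
    (g : C →ₗ[K] M) :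
    (TensorProduct.lid K M).toLinearMap ∘ₗ TensorProduct.map f g ∘ₗ comul =
      (TensorProduct.rid K M).toLinearMap ∘ₗ TensorProduct.map g f ∘ₗ comul := by
  have hswap : (TensorProduct.lid K M).toLinearMap ∘ₗ TensorProduct.map f g =
      (TensorProduct.rid K M).toLinearMap ∘ₗ TensorProduct.map g f ∘ₗ
        (TensorProduct.comm K C C).toLinearMap := by
    ext
    simp
  rw [← LinearMap.comp_assoc, hswap, LinearMap.comp_assoc, LinearMap.comp_assoc,
    comm_comp_comul]

theorem toConv_counit : toConv (counit : C →ₗ[K] K) = 1 := by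
  ext
  simp

variable [CommSemiring A] [Algebra K A]

variable (A) in
def convComap (φ : C →ₗc[K] D) : WithConv (D →ₗ[K] A) →* WithConv (C →ₗ[K] A) where
  toFun f := toConv (f.ofConv ∘ₗ φ)
  map_one' := by ext; simp
  map_mul' f g := congrArg toConv (LinearMap.convMul_comp_coalgHom_distrib f g φ)

theorem convComap_conj [IsCocomm K C] (φ : C →ₗc[K] D) {f g : WithConv (D →ₗ[K] A)}
    (hfg : f * g = 1) (h : WithConv (C →ₗ[K] A)) :
    convComap A φ g * h * convComap A φ f = h := by
  rw [mul_right_comm, mul_comm (convComap A φ g), ← map_mul, hfg, map_one, one_mul]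

end Convolution

section Projections

variable (K C D : Type) [CommSemiring K] [AddCommMonoid C] [Module K C] [Coalgebra K C]
  [AddCommMonoid D] [Module K D] [Coalgebra K D]

def Coalgebra.TensorProduct.projLeft : C ⊗[K] D →ₗc[K] C :=
  (Coalgebra.TensorProduct.rid K K C).toCoalgHom.comp
    (Coalgebra.TensorProduct.map (CoalgHom.id K C) (counitCoalgHom K D))

def Coalgebra.TensorProduct.projRight : C ⊗[K] D →ₗc[K] D :=
  (Coalgebra.TensorProduct.lid K D).toCoalgHom.comp
    (Coalgebra.TensorProduct.map (counitCoalgHom K C) (CoalgHom.id K D))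

end Projections

section CocommutativeBialgebra

open Coalgebra.TensorProduct

theorem toConv_conv2 (f g : H ⊗[k] H →ₗ[k] k) :
    toConv (conv2 k H f g) = toConv f * toConv g := rfl

theorem toConv_conv3 (f g : H ⊗[k] (H ⊗[k] H) →ₗ[k] k) :
    toConv (conv3 k H f g) = toConv f * toConv g := rfl

theorem toConv_f12 (f : H ⊗[k] H →ₗ[k] k) :
    toConv (f12 k H f) =
      convComap k ((projLeft k (H ⊗[k] H) H).comp
        (Coalgebra.TensorProduct.assoc k k H H H).symm.toCoalgHom) (toConv f) := by
  refine WithConv.ext (TensorProduct.ext_threefold' fun a b c => ?_)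
  simp [f12, convComap, projLeft, mul_comm]

theorem toConv_f23 (f : H ⊗[k] H →ₗ[k] k) :
    toConv (f23 k H f) = convComap k (projRight k H (H ⊗[k] H)) (toConv f) := by
  refine WithConv.ext (TensorProduct.ext_threefold' fun a b c => ?_)
  simp [f23, convComap, projRight]

variable [IsCocomm k H]

theorem convSM_eq_convMS (f : H ⊗[k] H →ₗ[k] k) (g : H ⊗[k] H →ₗ[k] H) :
    convSM k H f g = convMS k H g f :=
  lid_map_comp_comul_eq_rid_map_comp_comul f g

variable {k H}

theorem conv3_f12_conj_eq {R Rinv : H ⊗[k] H →ₗ[k] k} (hR : toConv R * toConv Rinv = 1)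
    (g : H ⊗[k] (H ⊗[k] H) →ₗ[k] k) :
    conv3 k H (conv3 k H (f12 k H Rinv) g) (f12 k H R) = g := by
  apply toConv_injective
  simp only [toConv_conv3, toConv_f12]
  exact convComap_conj _ hR _

theorem conv3_f23_conj_eq {R Rinv : H ⊗[k] H →ₗ[k] k} (hR : toConv R * toConv Rinv = 1)
    (g : H ⊗[k] (H ⊗[k] H) →ₗ[k] k) :
    conv3 k H (conv3 k H (f23 k H Rinv) g) (f23 k H R) = g := by
  apply toConv_injective
  simp only [toConv_conv3, toConv_f23]
  exact convComap_conj _ hR _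

theorem conv2_eq_conv2_iff {R Rinv : H ⊗[k] H →ₗ[k] k} (hR : toConv R * toConv Rinv = 1)
    (χ ψ : H ⊗[k] H →ₗ[k] k) : conv2 k H R χ = conv2 k H ψ R ↔ ψ = χ := by
  rw [← (toConv_injective (A := H ⊗[k] H →ₗ[k] k)).eq_iff, toConv_conv2, toConv_conv2, mul_comm,
    (IsUnit.of_mul_eq_one _ hR).mul_left_inj, toConv_injective.eq_iff, eq_comm]

end CocommutativeBialgebra

theorem cocommutative_preCartier_iff_biderivation
    (hcocomm : ∀ h : H,
      TensorProduct.comm k H H (Coalgebra.comul (R := k) h) = Coalgebra.comul (R := k) h)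
    (R Rinv χ : H ⊗[k] H →ₗ[k] k)
    (hRinv1 : conv2 k H R Rinv = Coalgebra.counit (R := k) (A := H ⊗[k] H)) :
    ((convSM k H χ (LinearMap.mul' k H) = convMS k H (LinearMap.mul' k H) χ ∧
        χ.comp (idMulC3 k H)
          = f12 k H χ + conv3 k H (conv3 k H (f12 k H Rinv) (f13 k H χ)) (f12 k H R) ∧
        χ.comp (mulIdC3 k H)
          = f23 k H χ + conv3 k H (conv3 k H (f23 k H Rinv) (f13 k H χ)) (f23 k H R)) ↔
      (χ.comp (idMulC3 k H) = f12 k H χ + f13 k H χ ∧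
        χ.comp (mulIdC3 k H) = f23 k H χ + f13 k H χ)) ∧
    ((convSM k H χ (LinearMap.mul' k H) = convMS k H (LinearMap.mul' k H) χ ∧
        χ.comp (idMulC3 k H)
          = f12 k H χ + conv3 k H (conv3 k H (f12 k H Rinv) (f13 k H χ)) (f12 k H R) ∧
        χ.comp (mulIdC3 k H)
          = f23 k H χ + conv3 k H (conv3 k H (f23 k H Rinv) (f13 k H χ)) (f23 k H R) ∧
        conv2 k H R χ = conv2 k H (χ.comp (TensorProduct.comm k H H).toLinearMap) R) ↔
      (χ.comp (idMulC3 k H) = f12 k H χ + f13 k H χ ∧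
        χ.comp (mulIdC3 k H) = f23 k H χ + f13 k H χ ∧
        χ.comp (TensorProduct.comm k H H).toLinearMap = χ)) := by
  have : IsCocomm k H := ⟨LinearMap.ext hcocomm⟩
  have hR : toConv R * toConv Rinv = 1 := by rw [← toConv_conv2, hRinv1, toConv_counit]
  simp only [convSM_eq_convMS, conv3_f12_conj_eq hR, conv3_f23_conj_eq hR, conv2_eq_conv2_iff hR,
    true_and]
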